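/- Let partition pieces be constructed greedily subject to a capacity bound D, where D = ceil((1/m)(sum_{j in N} p_j + sum_{u=1}^r sum_{g in union_{j in R^u} M(j)} p_g)) + max_u (max_{j in R^u} p_j + sum_{g in union_{j in R^u} M(j)} p_g) - 1. If the greedy construction fails to add some element i of group R^k to the current part P^e (i.e., adding i would exceed D), then sum_{j in P^e} p_j + sum_{j in union of M(g) over the groups fully represented in P^e} p_j >= (1/m)(sum_{j in N} p_j + sum_{u=1}^r sum_{g in union_{j in R^u} M(j)} p_g). -/

import Mathlib

/-!
Load is subadditive, so the load of `insert i P` is at most the load of `P` plus the load of `{i}`.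
The load of `{i}` is bounded by the maximum term of `D`, and the load of `P` by the weight of `P`
plus the associated sets of the groups in `K`. So if adding `i` overflows `D`, that last quantity
is at least the ceiling term of `D`, which in turn is at least the total weight divided by `m`.
-/

open Finset

section SumBounds

variable {ι β : Type*} [DecidableEq ι] [AddCommMonoid β] [PartialOrder β]
  [CanonicallyOrderedAdd β] (f : ι → β)

theorem Finset.sum_union_le_add (s t : Finset ι) :
    ∑ x ∈ s ∪ t, f x ≤ ∑ x ∈ s, f x + ∑ x ∈ t, f x := by
  rw [← sum_union_inter]
  exact le_self_add

theorem Finset.sum_biUnion_le_sum_sum [IsOrderedAddMonoid β] {κ : Type*} (s : Finset κ) (t : κ → Finset ι) :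
    ∑ x ∈ s.biUnion t, f x ≤ ∑ a ∈ s, ∑ x ∈ t a, f x := by
  rw [← sup_eq_biUnion]
  exact apply_sup_le_sum (f := fun u => ∑ x ∈ u, f x) sum_empty (sum_union_le_add f _ _) s

end SumBounds

theorem Nat.cast_div_le_ceilDiv {K : Type*} [Field K] [LinearOrder K] [IsStrictOrderedRing K]
    (a b : ℕ) : (a / b : K) ≤ ((a + b - 1) / b : ℕ) := by
  rcases b.eq_zero_or_pos with rfl | hb
  · simp
  have h : a ≤ b * (a ⌈/⌉ b) := (ceilDiv_le_iff_le_mul hb).1 le_rfl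
  rw [div_le_iff₀ (by exact_mod_cast hb), mul_comm]
  exact_mod_cast h

section Load

variable {α : Type*} [DecidableEq α] (p : α → ℕ) (Ma : α → Finset α)

def load (P : Finset α) : ℕ := ∑ j ∈ P, p j + ∑ j ∈ P.biUnion Ma, p j

theorem load_union_le (s t : Finset α) : load p Ma (s ∪ t) ≤ load p Ma s + load p Ma t := by
  unfold load
  rw [union_biUnion]
  have := sum_union_le_add p s t
  have := sum_union_le_add p (s.biUnion Ma) (t.biUnion Ma)
  omega

theorem load_singleton_le_sup {r : ℕ} (R : Fin r → Finset α) {i : α} {k : Fin r}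
    (hik : i ∈ R k) :
    load p Ma {i} ≤ univ.sup (fun u => (R u).sup p + ∑ g ∈ (R u).biUnion Ma, p g) := by
  unfold load
  rw [sum_singleton, singleton_biUnion]
  calc p i + ∑ g ∈ Ma i, p g ≤ (R k).sup p + ∑ g ∈ (R k).biUnion Ma, p g :=
        add_le_add (le_sup hik) (sum_le_sum_of_subset (subset_biUnion_of_mem Ma hik))
    _ ≤ _ := le_sup (f := fun u => (R u).sup p + ∑ g ∈ (R u).biUnion Ma, p g) (mem_univ k)

theorem load_le_of_biUnion_subset {r : ℕ} (R : Fin r → Finset α) {P : Finset α}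
    {K : Finset (Fin r)} (hK : P.biUnion Ma ⊆ K.biUnion (fun u => (R u).biUnion Ma)) :
    load p Ma P ≤ ∑ j ∈ P, p j + ∑ u ∈ K, ∑ g ∈ (R u).biUnion Ma, p g :=
  add_le_add le_rfl ((sum_le_sum_of_subset hK).trans (sum_biUnion_le_sum_sum p _ _))

end Load

theorem stmt_15_general {α : Type*} [DecidableEq α] (N : Finset α) (p : α → ℕ)
    (Ma : α → Finset α) (m r : ℕ)
    (R : Fin r → Finset α)
    (D : ℕ)
    (hD : D = ((∑ j ∈ N, p j + ∑ u, ∑ g ∈ (R u).biUnion Ma, p g) + m - 1) / m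
      + Finset.univ.sup (fun u => (R u).sup p + ∑ g ∈ (R u).biUnion Ma, p g) - 1)
    (P : Finset α)
    (i : α) (k : Fin r) (hik : i ∈ R k)
    (K : Finset (Fin r))
    (hK : P.biUnion Ma ⊆ K.biUnion (fun u => (R u).biUnion Ma))
    (hfail : D < ∑ j ∈ insert i P, p j + ∑ j ∈ (insert i P).biUnion Ma, p j) :
    ((∑ j ∈ N, p j + ∑ u, ∑ g ∈ (R u).biUnion Ma, p g : ℕ) : ℚ) / m ≤
      ((∑ j ∈ P, p j + ∑ u ∈ K, ∑ g ∈ (R u).biUnion Ma, p g : ℕ) : ℚ) := by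
  have hload : load p Ma (insert i P) ≤ load p Ma {i} + load p Ma P := by
    rw [insert_eq]; exact load_union_le p Ma _ _
  have hi := load_singleton_le_sup p Ma R hik
  have hP := load_le_of_biUnion_subset p Ma R hK
  have hceil : (∑ j ∈ N, p j + ∑ u, ∑ g ∈ (R u).biUnion Ma, p g + m - 1) / m ≤
      ∑ j ∈ P, p j + ∑ u ∈ K, ∑ g ∈ (R u).biUnion Ma, p g := by
    have hfail' : D < load p Ma (insert i P) := hfail
    omega
  exact (Nat.cast_div_le_ceilDiv _ _).trans (by exact_mod_cast hceil)

/-- If the greedy construction fails to add an element `i` of group `R^k` to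
the current part `P` (adding `i` would exceed the capacity `D`), then the
weight of `P` plus the weight of the associated-set unions of the groups
represented in `P` (indexed by `K`) is at least
`(1/m) (∑_{j ∈ N} p_j + ∑_u ∑_{g ∈ ⋃_{j ∈ R^u} M(j)} p_g)`. -/
theorem stmt_15 {α : Type*} [DecidableEq α] (N M : Finset α) (p : α → ℕ)
    (Ma : α → Finset α) (m r : ℕ) (hm : 0 < m)
    (hNM : Disjoint N M) (hp : ∀ i ∈ N ∪ M, 0 < p i)
    (hMa : ∀ i ∈ N, Ma i ⊆ M) (hU : N.biUnion Ma = M)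
    (R : Fin r → Finset α)
    (hRdisj : ∀ u u', u ≠ u' → Disjoint (R u) (R u'))
    (hRcover : Finset.univ.biUnion R = N)
    (D : ℕ)
    (hD : D = ((∑ j ∈ N, p j + ∑ u, ∑ g ∈ (R u).biUnion Ma, p g) + m - 1) / m
      + Finset.univ.sup (fun u => (R u).sup p + ∑ g ∈ (R u).biUnion Ma, p g) - 1)
    (P : Finset α) (hPN : P ⊆ N)
    (i : α) (k : Fin r) (hik : i ∈ R k) (hiP : i ∉ P)
    (K : Finset (Fin r))
    (hK : P.biUnion Ma ⊆ K.biUnion (fun u => (R u).biUnion Ma))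
    (hfail : D < ∑ j ∈ insert i P, p j + ∑ j ∈ (insert i P).biUnion Ma, p j) :
    ((∑ j ∈ N, p j + ∑ u, ∑ g ∈ (R u).biUnion Ma, p g : ℕ) : ℚ) / m ≤
      ((∑ j ∈ P, p j + ∑ u ∈ K, ∑ g ∈ (R u).biUnion Ma, p g : ℕ) : ℚ) :=
  stmt_15_general N p Ma m r R D hD P i k hik K hK hfail
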